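/- Let ε ∈ (0,1), k ∈ ℤ_{≥0}, and let u ∈ H¹(Ω_ε)³ satisfy u·n_ε = 0 on ∂Ω_ε, where n_ε is the outward unit normal of Ω_ε := {x : 1 < |x| < 1+ε}. Then for a.e. y ∈ S², div_{S²}(M_ε^k u)(y) = (M_ε^{k+1}(div u))(y) + (k+1)(M_ε^k(u·n̄))(y), where n̄(x) = x/|x|. -/

import Mathlib

open MeasureTheory Matrix
open scoped RealInnerProductSpace

noncomputable section

abbrev E3 : Type := EuclideanSpace ℝ (Fin 3)

def proj3 (y : E3) : Matrix (Fin 3) (Fin 3) ℝ :=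
  Matrix.of fun i j => (if i = j then (1:ℝ) else 0) - y i * y j

def pd (f : E3 → ℝ) (x : E3) (i : Fin 3) : ℝ :=
  fderiv ℝ f x (EuclideanSpace.single i 1)

def gradM (u : E3 → E3) (x : E3) : Matrix (Fin 3) (Fin 3) ℝ :=
  Matrix.of fun i j => fderiv ℝ (fun z => u z j) x (EuclideanSpace.single i 1)

def symM (A : Matrix (Fin 3) (Fin 3) ℝ) : Matrix (Fin 3) (Fin 3) ℝ :=
  (1/2 : ℝ) • (A + Aᵀ)

def tgradM (u : E3 → E3) (y : E3) : Matrix (Fin 3) (Fin 3) ℝ :=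
  proj3 y * gradM u y

def strainS (u : E3 → E3) (y : E3) : Matrix (Fin 3) (Fin 3) ℝ :=
  proj3 y * symM (tgradM u y) * proj3 y

def vE (v : E3 → E3) (x : E3) : E3 := ‖x‖ • v (‖x‖⁻¹ • x)

def ra (a : E3) : E3 → E3 := fun x => WithLp.toLp 2 (crossProduct a x)

def shell (ε : ℝ) : Set E3 := {x : E3 | 1 < ‖x‖ ∧ ‖x‖ < 1 + ε}

def sphM : Measure E3 := (Measure.hausdorffMeasure 2 : Measure E3).restrict (Metric.sphere (0:E3) 1)

def avg (ε : ℝ) (k : ℕ) (φ : E3 → ℝ) (y : E3) : ℝ :=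
  (1/ε) * ∫ r in (1:ℝ)..(1+ε), φ (r • y) * r ^ k

def avgV (ε : ℝ) (k : ℕ) (u : E3 → E3) (y : E3) : E3 :=
  WithLp.toLp 2 fun j => (1/ε) * ∫ r in (1:ℝ)..(1+ε), u (r • y) j * r ^ k

def div3 (u : E3 → E3) (x : E3) : ℝ :=
  ∑ i, fderiv ℝ (fun z => u z i) x (EuclideanSpace.single i 1)

def sdiv (F : E3 → E3) (y : E3) : ℝ :=
  ∑ j, ∑ i, proj3 y j i * fderiv ℝ (fun x => F (‖x‖⁻¹ • x) j) y (EuclideanSpace.single i 1)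

def frob2 (A : Matrix (Fin 3) (Fin 3) ℝ) : ℝ := ∑ i, ∑ j, (A i j)^2

/-! Write `N x = x / ‖x‖`. At a unit vector `y` the map `N` has derivative `v ↦ v - ⟪y, v⟫ y`, so
the tangential divergence of `F ∘ N` equals `div F - y · (∇F) y`. Differentiating under the
integral gives `∇(M^k φ) = M^{k+1}(∇φ)`, so for `F = M^k u` the first term is `M^{k+1}(div u)`
and the second is `M^{k+1}` of the radial derivative `r ↦ d/dr ⟪u (r y), y⟫`. Integrating by
parts against `r^{k+1}` turns it into `-(k+1) M^k ⟪u, y⟫`; the boundary terms vanish by the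
no-penetration conditions at `r = 1` and `r = 1 + ε`. -/

open Set Metric Function

theorem hasFDerivAt_intervalIntegral_of_continuous
    {E G : Type*} [NormedAddCommGroup E] [NormedSpace ℝ E] [ProperSpace E]
    [NormedAddCommGroup G] [NormedSpace ℝ G]
    {F : E → ℝ → G} {F' : E → ℝ → E →L[ℝ] G}
    (hF : Continuous (uncurry F)) (hF' : Continuous (uncurry F'))
    (hFF' : ∀ x r, HasFDerivAt (F · r) (F' x r) x) (a b : ℝ) (x₀ : E) :
    HasFDerivAt (fun x => ∫ r in a..b, F x r) (∫ r in a..b, F' x₀ r) x₀ := by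
  obtain ⟨C, hC⟩ := ((isCompact_closedBall x₀ 1).prod isCompact_uIcc).exists_bound_of_continuousOn
    hF'.continuousOn
  have hF_sect : ∀ x, Continuous (F x) := fun x => hF.comp (Continuous.prodMk_right x)
  have hF'_sect : Continuous (F' x₀) := hF'.comp (Continuous.prodMk_right x₀)
  refine intervalIntegral.hasFDerivAt_integral_of_dominated_of_fderiv_le (bound := fun _ => C)
    (ball_mem_nhds x₀ one_pos)
    (Filter.Eventually.of_forall fun x => (hF_sect x).aestronglyMeasurable)
    ((hF_sect x₀).intervalIntegrable a b) hF'_sect.aestronglyMeasurable ?_ intervalIntegrable_const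
    (Filter.Eventually.of_forall fun r _ x _ => hFF' x r)
  exact Filter.Eventually.of_forall fun r hr x hx =>
    hC (x, r) ⟨ball_subset_closedBall hx, uIoc_subset_uIcc hr⟩

theorem hasFDerivAt_norm_of_norm_eq_one {F : Type*} [NormedAddCommGroup F] [InnerProductSpace ℝ F]
    {y : F} (hy : ‖y‖ = 1) : HasFDerivAt (fun x : F => ‖x‖) (innerSL ℝ y) y := by
  have h := (hasStrictFDerivAt_norm_sq y).hasFDerivAt.sqrt (by simp [hy])
  simp only [Real.sqrt_sq (norm_nonneg _), hy] at h
  convert h using 1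
  ext v
  simp

theorem hasFDerivAt_inv_norm_smul {F : Type*} [NormedAddCommGroup F] [InnerProductSpace ℝ F]
    {y : F} (hy : ‖y‖ = 1) :
    HasFDerivAt (fun x : F => ‖x‖⁻¹ • x)
      (ContinuousLinearMap.id ℝ F - (innerSL ℝ y).smulRight y) y := by
  have hinv : HasFDerivAt (fun x : F => ‖x‖⁻¹) (-innerSL ℝ y) y := by
    have h := (hasDerivAt_inv (by simp [hy] : ‖y‖ ≠ 0)).comp_hasFDerivAt y
      (hasFDerivAt_norm_of_norm_eq_one hy)
    simpa [hy, Function.comp_def] using h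
  refine (hinv.smul (hasFDerivAt_id y)).congr_fderiv ?_
  ext v
  simp [hy, sub_eq_add_neg]

theorem clm_apply_eq_sum_mul_single {ι : Type*} [Fintype ι] [DecidableEq ι]
    (L : EuclideanSpace ℝ ι →L[ℝ] ℝ) (y : EuclideanSpace ℝ ι) :
    L y = ∑ i, y i * L (EuclideanSpace.single i 1) := by
  conv_lhs => rw [← (EuclideanSpace.basisFun ι ℝ).sum_repr y]
  simp [map_sum]

theorem sum_sq_eq_one {ι : Type*} [Fintype ι] {y : EuclideanSpace ℝ ι} (hy : ‖y‖ = 1) :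
    ∑ i, y i ^ 2 = 1 := by
  have h := real_inner_self_eq_norm_sq y
  rw [hy, PiLp.inner_apply] at h
  simpa using h

theorem sum_proj3_mul {y : E3} (hy : ‖y‖ = 1) (a : Fin 3 → ℝ) (j : Fin 3) :
    ∑ i, proj3 y j i * (a i - y i * ∑ l, y l * a l) = a j - y j * ∑ l, y l * a l := by
  set g := ∑ l, y l * a l with hg
  have hterm : ∀ i, proj3 y j i * (a i - y i * g)
      = (if j = i then a i - y i * g else 0) - y j * (y i * a i) + y j * g * y i ^ 2 := by
    intro i
    simp only [proj3, of_apply]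
    split_ifs <;> ring
  rw [Finset.sum_congr rfl fun i _ => hterm i, Finset.sum_add_distrib, Finset.sum_sub_distrib,
    Finset.sum_ite_eq, ← Finset.mul_sum, ← Finset.mul_sum, ← hg, sum_sq_eq_one hy]
  simp

theorem sdiv_eq_sum_fderiv (F : E3 → E3) {y : E3} (hy : ‖y‖ = 1)
    (hF : ∀ j, DifferentiableAt ℝ (fun z => F z j) y) :
    sdiv F y = ∑ j, (fderiv ℝ (fun z => F z j) y (EuclideanSpace.single j 1)
      - y j * fderiv ℝ (fun z => F z j) y y) := by
  refine Finset.sum_congr rfl fun j _ => ?_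
  set L := fderiv ℝ (fun z => F z j) y
  have hFj : HasFDerivAt (fun z => F z j) L (‖y‖⁻¹ • y) := by
    rw [hy, inv_one, one_smul]
    exact (hF j).hasFDerivAt
  have hcomp : HasFDerivAt (fun x => F (‖x‖⁻¹ • x) j)
      (L.comp (ContinuousLinearMap.id ℝ E3 - (innerSL ℝ y).smulRight y)) y :=
    HasFDerivAt.comp (f := fun x : E3 => ‖x‖⁻¹ • x) y hFj (hasFDerivAt_inv_norm_smul hy)
  have hpartial : ∀ i, fderiv ℝ (fun x => F (‖x‖⁻¹ • x) j) y (EuclideanSpace.single i 1)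
      = L (EuclideanSpace.single i 1) - y i * L y := by
    intro i
    simp [hcomp.fderiv, EuclideanSpace.inner_single_right]
  simp only [hpartial]
  rw [clm_apply_eq_sum_mul_single L y]
  exact sum_proj3_mul hy _ j

section RadialAverage

variable {φ : E3 → ℝ} (ε : ℝ) (k : ℕ)

theorem hasFDerivAt_avg (hφ : ContDiff ℝ 1 φ) (z : E3) :
    HasFDerivAt (avg ε k φ) ((1 / ε) • ∫ r in (1:ℝ)..(1+ε), r ^ (k+1) • fderiv ℝ φ (r • z)) z := by
  have hφ' := hφ.continuous_fderiv one_ne_zero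
  refine HasFDerivAt.const_mul (hasFDerivAt_intervalIntegral_of_continuous
    (F := fun x r => φ (r • x) * r ^ k) (F' := fun x r => r ^ (k+1) • fderiv ℝ φ (r • x))
    ?_ ?_ (fun x r => ?_) 1 (1+ε) z) (1 / ε)
  · exact (hφ.continuous.comp (continuous_snd.smul continuous_fst)).mul (continuous_snd.pow k)
  · exact (continuous_snd.pow (k+1)).smul (hφ'.comp (continuous_snd.smul continuous_fst))
  · have h := (((hφ.differentiable one_ne_zero) (r • x)).hasFDerivAt.comp x
      ((hasFDerivAt_id x).const_smul r)).mul_const (r ^ k)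
    refine h.congr_fderiv ?_
    ext v
    simp
    ring

theorem fderiv_avg_apply (hφ : ContDiff ℝ 1 φ) (z v : E3) :
    fderiv ℝ (avg ε k φ) z v = avg ε (k+1) (fun x => fderiv ℝ φ x v) z := by
  have hint : IntervalIntegrable (fun r : ℝ => r ^ (k+1) • fderiv ℝ φ (r • z)) volume 1 (1+ε) :=
    ((continuous_pow (k+1)).smul ((hφ.continuous_fderiv one_ne_zero).comp
      (continuous_id.smul continuous_const))).intervalIntegrable _ _
  rw [(hasFDerivAt_avg ε k hφ z).fderiv, _root_.smul_apply,
    ContinuousLinearMap.intervalIntegral_apply hint, smul_eq_mul, avg]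
  simp only [_root_.smul_apply, smul_eq_mul, mul_comm]

theorem avg_succ_fderiv_apply_self (hφ : ContDiff ℝ 1 φ) {y : E3} (h1 : φ y = 0)
    (h2 : φ ((1+ε) • y) = 0) :
    avg ε (k+1) (fun x => fderiv ℝ φ x y) y = -((k+1) * avg ε k φ y) := by
  have hφ' : Continuous fun r : ℝ => fderiv ℝ φ (r • y) y :=
    ((hφ.continuous_fderiv one_ne_zero).comp (continuous_id.smul continuous_const)).clm_apply
      continuous_const
  have hradial : ∀ r : ℝ, HasDerivAt (fun s : ℝ => φ (s • y)) (fderiv ℝ φ (r • y) y) r := fun r =>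
    ((hφ.differentiable one_ne_zero) (r • y)).hasFDerivAt.comp_hasDerivAt r
      (by simpa using (hasDerivAt_id r).smul_const y)
  have hpow : ∀ r : ℝ, HasDerivAt (fun s : ℝ => s ^ (k+1)) (((k:ℝ)+1) * r ^ k) r := fun r => by
    simpa using hasDerivAt_pow (k+1) r
  have hibp := intervalIntegral.integral_mul_deriv_eq_deriv_mul (a := 1) (b := 1+ε)
    (fun r _ => hpow r) (fun r _ => hradial r)
    ((continuous_const.mul (continuous_pow k)).intervalIntegrable _ _) (hφ'.intervalIntegrable _ _)
  rw [one_smul, h1, h2, mul_zero, mul_zero, sub_zero, zero_sub] at hibp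
  calc avg ε (k+1) (fun x => fderiv ℝ φ x y) y
      = (1 / ε) * ∫ r in (1:ℝ)..(1+ε), r ^ (k+1) * fderiv ℝ φ (r • y) y := by
        simp only [avg, mul_comm]
    _ = (1 / ε) * -∫ r in (1:ℝ)..(1+ε), ((k:ℝ)+1) * (φ (r • y) * r ^ k) := by
        rw [hibp]
        congr 3 with r
        ring
    _ = -((k+1) * avg ε k φ y) := by
        rw [intervalIntegral.integral_const_mul, avg]
        ring

end RadialAverage

theorem avg_const_mul (ε : ℝ) (k : ℕ) (c : ℝ) (φ : E3 → ℝ) (y : E3) :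
    avg ε k (fun x => c * φ x) y = c * avg ε k φ y := by
  simp only [avg, mul_assoc, intervalIntegral.integral_const_mul]
  ring

theorem avg_sum {ι : Type*} (s : Finset ι) (ε : ℝ) (k : ℕ) {φ : ι → E3 → ℝ}
    (hφ : ∀ i ∈ s, Continuous (φ i)) (y : E3) :
    avg ε k (fun x => ∑ i ∈ s, φ i x) y = ∑ i ∈ s, avg ε k (φ i) y := by
  simp only [avg, Finset.sum_mul, ← Finset.mul_sum]
  rw [intervalIntegral.integral_finsetSum (f := fun i r => φ i (r • y) * r ^ k) fun i hi =>
    (((hφ i hi).comp (continuous_id.smul continuous_const)).mul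
      (continuous_pow k)).intervalIntegrable _ _]

theorem avgV_apply (ε : ℝ) (k : ℕ) (u : E3 → E3) (y : E3) (j : Fin 3) :
    avgV ε k u y j = avg ε k (fun z => u z j) y := rfl

theorem sdiv_avgV (ε : ℝ) (k : ℕ) {u : E3 → E3} (hu : ContDiff ℝ 1 u) {y : E3} (hy : ‖y‖ = 1) :
    sdiv (avgV ε k u) y = avg ε (k+1) (div3 u) y
      - avg ε (k+1) (fun x => ∑ j, y j * fderiv ℝ (fun z => u z j) x y) y := by
  have hu' : ∀ j, ContDiff ℝ 1 (fun z => u z j) := (contDiff_piLp 2).1 hu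
  have hu'_fderiv : ∀ j (v : E3), Continuous fun x => fderiv ℝ (fun z => u z j) x v :=
    fun j v => ((hu' j).continuous_fderiv one_ne_zero).clm_apply continuous_const
  rw [sdiv_eq_sum_fderiv _ hy fun j => (hasFDerivAt_avg ε k (hu' j) y).differentiableAt]
  simp only [avgV_apply, fderiv_avg_apply ε k (hu' _), Finset.sum_sub_distrib, ← avg_const_mul]
  congr 1
  · exact (avg_sum _ _ _ (φ := fun j x => fderiv ℝ (fun z => u z j) x
      (EuclideanSpace.single j 1)) (fun j _ => hu'_fderiv j _) y).symm
  · exact (avg_sum _ _ _ (fun j _ => continuous_const.mul (hu'_fderiv j y)) y).symm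

theorem stmt17_general (ε : ℝ) (k : ℕ)
    (u : E3 → E3) (hu : ContDiff ℝ 1 u)
    (hb1 : ∀ y : E3, ‖y‖ = 1 → ⟪u y, y⟫ = 0)
    (hb2 : ∀ y : E3, ‖y‖ = 1 → ⟪u ((1+ε) • y), y⟫ = 0)
    (y : E3) (hy : ‖y‖ = 1) :
    sdiv (avgV ε k u) y
      = (1/ε) * (∫ r in (1:ℝ)..(1+ε), div3 u (r • y) * r ^ (k+1))
        + ((k : ℝ) + 1) * ((1/ε) * ∫ r in (1:ℝ)..(1+ε), ⟪u (r • y), y⟫ * r ^ k) := by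
  have hu' : ∀ j, ContDiff ℝ 1 (fun z => u z j) := (contDiff_piLp 2).1 hu
  set g : E3 → ℝ := fun x => ∑ j, y j * u x j
  have hinner : (fun x => ⟪u x, y⟫) = g := by
    funext x
    simp [g, PiLp.inner_apply]
  have hg_fderiv : ∀ x, fderiv ℝ g x y = ∑ j, y j * fderiv ℝ (fun z => u z j) x y := by
    intro x
    have h : HasFDerivAt g (∑ j, y j • fderiv ℝ (fun z => u z j) x) x :=
      HasFDerivAt.fun_sum fun j _ =>
        (((hu' j).differentiable one_ne_zero) x).hasFDerivAt.const_mul (y j)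
    simp [h.fderiv]
  have hg1 : g y = 0 := by rw [← hinner]; exact hb1 y hy
  have hg2 : g ((1+ε) • y) = 0 := by rw [← hinner]; exact hb2 y hy
  have hg : ContDiff ℝ 1 g := ContDiff.sum fun j _ => contDiff_const.mul (hu' j)
  rw [sdiv_avgV ε k hu hy, ← funext hg_fderiv, avg_succ_fderiv_apply_self ε k hg hg1 hg2,
    ← hinner, avg, avg]
  ring

/-- `div_{S²}(M_ε^k u) = M_ε^{k+1}(div u) + (k+1) M_ε^k(u·n̄)` on `S²`
for `u` with `u·n_ε = 0` on `∂Ω_ε`. -/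
theorem stmt17 (ε : ℝ) (hε0 : 0 < ε) (hε1 : ε < 1) (k : ℕ)
    (u : E3 → E3) (hu : ContDiff ℝ 1 u)
    (hb1 : ∀ y : E3, ‖y‖ = 1 → ⟪u y, y⟫ = 0)
    (hb2 : ∀ y : E3, ‖y‖ = 1 → ⟪u ((1+ε) • y), y⟫ = 0)
    (y : E3) (hy : ‖y‖ = 1) :
    sdiv (avgV ε k u) y
      = (1/ε) * (∫ r in (1:ℝ)..(1+ε), div3 u (r • y) * r ^ (k+1))
        + ((k : ℝ) + 1) * ((1/ε) * ∫ r in (1:ℝ)..(1+ε), ⟪u (r • y), y⟫ * r ^ k) :=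
  stmt17_general ε k u hu hb1 hb2 y hy
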